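/- Let (A,Δ) be a regular weak multiplier Hopf algebra with a single faithful left cointegral h. Then the maps ω ↦ (id⊗ω)Δ(h) and ω ↦ (ω⊗id)Δ(h) are bijective from Ã onto A. -/

import Mathlib

noncomputable section

open scoped TensorProduct

/-- An (abstract model of a) regular weak multiplier Hopf algebra `(A, Δ)` over `ℂ`.
`M` plays the role of the multiplier algebra `M(A)`, `A` is the underlying non-degenerate
idempotent algebra (sitting inside `M(A)` as a two-sided ideal), `M2` plays the role of
`M(A ⊗ A)` and `tp m n` is the multiplier `m ⊗ n`.  `Δ` is the coproduct (together with its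
canonical extension to `M(A)`), `E = Δ(1)` is the canonical idempotent giving the ranges of
the canonical maps, `ε` is the counit, `S` is the (bijective, since the algebra is regular)
antipode, and `εs`, `εt` are the source and target maps `ε_s(a) = Σ S(a₍₁₎)a₍₂₎`,
`ε_t(a) = Σ a₍₁₎S(a₍₂₎)`.  `sl ω` and `sr ω` are the slice maps `ω ⊗ id` and `id ⊗ ω`;
`mS`, `sM` are the maps `a ⊗ b ↦ a·S(b)`, `a ⊗ b ↦ S(a)·b` and `tE`, `sE` the maps
`a ⊗ b ↦ ε_t(a)·b`, `a ⊗ b ↦ a·ε_s(b)`, through which the defining Sweedler-notation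
identities (such as `Σ ε_t(a₍₁₎)a₍₂₎ = a`, i.e. `Σ a₍₁₎S(a₍₂₎)a₍₃₎ = a`) are expressed in
covered form. -/
structure RegularWMHA where
  M : Type
  [ringM : Ring M]
  [algebraM : Algebra ℂ M]
  A : NonUnitalSubalgebra ℂ M
  idealL : ∀ (m a : M), a ∈ A → m * a ∈ A
  idealR : ∀ (m a : M), a ∈ A → a * m ∈ A
  nondegL : ∀ m : M, (∀ a ∈ A, m * a = 0) → m = 0
  nondegR : ∀ m : M, (∀ a ∈ A, a * m = 0) → m = 0
  idemA : ∀ a ∈ A, a ∈ Submodule.span ℂ {x : M | ∃ b ∈ A, ∃ c ∈ A, x = b * c}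
  localUnits : ∀ a ∈ A, ∃ e ∈ A, e * a = a ∧ a * e = a
  M2 : Type
  [ringM2 : Ring M2]
  [algebraM2 : Algebra ℂ M2]
  tp : M →ₗ[ℂ] M →ₗ[ℂ] M2
  tp_mul : ∀ m n m' n' : M, tp m n * tp m' n' = tp (m * m') (n * n')
  tp_one : tp 1 1 = 1
  nondeg2L : ∀ z : M2, (∀ a ∈ A, ∀ b ∈ A, z * tp a b = 0) → z = 0
  nondeg2R : ∀ z : M2, (∀ a ∈ A, ∀ b ∈ A, tp a b * z = 0) → z = 0
  Δ : M →ₗ[ℂ] M2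
  Δ_mul : ∀ m n : M, Δ (m * n) = Δ m * Δ n
  E : M2
  E_def : Δ 1 = E
  Δ_leg1 : ∀ a ∈ A, ∀ b ∈ A, Δ a * tp 1 b ∈
    Submodule.span ℂ (Set.image2 (fun x y : M => tp x y) (A : Set M) (A : Set M))
  Δ_leg2 : ∀ a ∈ A, ∀ b ∈ A, tp a 1 * Δ b ∈
    Submodule.span ℂ (Set.image2 (fun x y : M => tp x y) (A : Set M) (A : Set M))
  Δ_leg3 : ∀ a ∈ A, ∀ b ∈ A, Δ a * tp b 1 ∈
    Submodule.span ℂ (Set.image2 (fun x y : M => tp x y) (A : Set M) (A : Set M))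
  Δ_leg4 : ∀ a ∈ A, ∀ b ∈ A, tp 1 a * Δ b ∈
    Submodule.span ℂ (Set.image2 (fun x y : M => tp x y) (A : Set M) (A : Set M))
  Δ_full_left : ∀ V : Submodule ℂ M,
    (∀ a ∈ A, ∀ b ∈ A, Δ a * tp 1 b ∈
      Submodule.span ℂ (Set.image2 (fun x y : M => tp x y) (V : Set M) (A : Set M))) →
    ∀ a ∈ A, a ∈ V
  Δ_full_right : ∀ V : Submodule ℂ M,
    (∀ a ∈ A, ∀ b ∈ A, tp a 1 * Δ b ∈
      Submodule.span ℂ (Set.image2 (fun x y : M => tp x y) (A : Set M) (V : Set M))) →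
    ∀ a ∈ A, a ∈ V
  sl : Module.Dual ℂ A →ₗ[ℂ] M2 →ₗ[ℂ] M
  sr : Module.Dual ℂ A →ₗ[ℂ] M2 →ₗ[ℂ] M
  sl_tp : ∀ (ω : Module.Dual ℂ A) (a b : A), sl ω (tp (a : M) (b : M)) = ω a • (b : M)
  sr_tp : ∀ (ω : Module.Dual ℂ A) (a b : A), sr ω (tp (a : M) (b : M)) = ω b • (a : M)
  sl_mul_right : ∀ (ω : Module.Dual ℂ A) (z : M2) (m : M), sl ω (z * tp 1 m) = sl ω z * m
  sl_mul_left : ∀ (ω : Module.Dual ℂ A) (z : M2) (m : M), sl ω (tp 1 m * z) = m * sl ω z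
  sr_mul_right : ∀ (ω : Module.Dual ℂ A) (z : M2) (m : M), sr ω (z * tp m 1) = sr ω z * m
  sr_mul_left : ∀ (ω : Module.Dual ℂ A) (z : M2) (m : M), sr ω (tp m 1 * z) = m * sr ω z
  coassoc : ∀ (m : M) (ω ω' : Module.Dual ℂ A),
    sl ω (Δ (sr ω' (Δ m))) = sr ω' (Δ (sl ω (Δ m)))
  ε : Module.Dual ℂ A
  counit_l : ∀ a b : A, sl ε (Δ (a : M) * tp 1 (b : M)) = (a : M) * (b : M)
  counit_r : ∀ a b : A, sr ε (tp (a : M) 1 * Δ (b : M)) = (a : M) * (b : M)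
  S : M ≃ₗ[ℂ] M
  S_mul : ∀ m n : M, S (m * n) = S n * S m
  S_one : S 1 = 1
  S_mem : ∀ a ∈ A, S a ∈ A
  S_symm_mem : ∀ a ∈ A, S.symm a ∈ A
  mS : M2 →ₗ[ℂ] M
  sM : M2 →ₗ[ℂ] M
  mS_tp : ∀ a b : A, mS (tp (a : M) (b : M)) = (a : M) * S (b : M)
  sM_tp : ∀ a b : A, sM (tp (a : M) (b : M)) = S (a : M) * (b : M)
  εt : M →ₗ[ℂ] M
  εs : M →ₗ[ℂ] M
  εt_def : ∀ a ∈ A, ∀ b ∈ A, b * εt a = mS (tp b 1 * Δ a)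
  εs_def : ∀ a ∈ A, ∀ b ∈ A, εs a * b = sM (Δ a * tp 1 b)
  tE : M2 →ₗ[ℂ] M
  sE : M2 →ₗ[ℂ] M
  tE_tp : ∀ a b : A, tE (tp (a : M) (b : M)) = εt (a : M) * (b : M)
  sE_tp : ∀ a b : A, sE (tp (a : M) (b : M)) = (a : M) * εs (b : M)
  εt_counital : ∀ a ∈ A, ∀ b ∈ A, tE (Δ a * tp 1 b) = a * b
  εs_counital : ∀ a ∈ A, ∀ b ∈ A, sE (tp b 1 * Δ a) = b * a
  Δ_εt : ∀ a ∈ A, Δ (εt a) = tp (εt a) 1 * E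
  Δ_εs : ∀ a ∈ A, Δ (εs a) = E * tp 1 (εs a)

namespace RegularWMHA

attribute [instance] RegularWMHA.ringM RegularWMHA.algebraM
attribute [instance] RegularWMHA.ringM2 RegularWMHA.algebraM2

variable (W : RegularWMHA)

/-- The subalgebra `A_s = {y ∈ M(A) | Δ(y) = E(1 ⊗ y)}`. -/
def As : Set W.M := {y | W.Δ y = W.E * W.tp 1 y}

/-- The subalgebra `A_t = {x ∈ M(A) | Δ(x) = (x ⊗ 1)E}`. -/
def At : Set W.M := {x | W.Δ x = W.tp x 1 * W.E}

/-- A left cointegral: a non-zero `h ∈ M(A)` with `a·h = ε_t(a)·h` for all `a ∈ A`. -/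
def IsLeftCointegral (h : W.M) : Prop := h ≠ 0 ∧ ∀ a ∈ W.A, a * h = W.εt a * h

/-- A right cointegral: a non-zero `k ∈ M(A)` with `k·a = k·ε_s(a)` for all `a ∈ A`. -/
def IsRightCointegral (k : W.M) : Prop := k ≠ 0 ∧ ∀ a ∈ W.A, k * a = k * W.εs a

/-- The space `H` of left cointegrals lying in `A` (together with `0`). -/
def Hspace : Submodule ℂ W.M where
  carrier := {h | h ∈ W.A ∧ ∀ a ∈ W.A, a * h = W.εt a * h}
  add_mem' := by
    rintro x y ⟨hx1, hx2⟩ ⟨hy1, hy2⟩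
    exact ⟨add_mem hx1 hy1, fun a ha => by rw [mul_add, mul_add, hx2 a ha, hy2 a ha]⟩
  zero_mem' := ⟨zero_mem _, fun a _ => by rw [mul_zero, mul_zero]⟩
  smul_mem' := by
    rintro c x ⟨hx1, hx2⟩
    exact ⟨SMulMemClass.smul_mem c hx1, fun a ha => by
      rw [mul_smul_comm, mul_smul_comm, hx2 a ha]⟩

lemma mem_Hspace {h : W.M} :
    h ∈ W.Hspace ↔ h ∈ W.A ∧ ∀ a ∈ W.A, a * h = W.εt a * h := Iff.rfl

lemma Hspace_mul_mem (m : W.M) {h : W.M} (hh : h ∈ W.Hspace) : h * m ∈ W.Hspace := by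
  obtain ⟨h1, h2⟩ := hh
  exact ⟨W.idealR m h h1, fun a ha => by rw [← mul_assoc, h2 a ha, mul_assoc]⟩

/-- A left integral: a non-zero functional `φ` with `(id ⊗ φ)Δ(a) ∈ A_t` for all `a ∈ A`. -/
def IsLeftIntegral (φ : Module.Dual ℂ W.A) : Prop :=
  φ ≠ 0 ∧ ∀ a : W.A, W.sr φ (W.Δ (a : W.M)) ∈ W.At

/-- A right integral: a non-zero functional `ψ` with `(ψ ⊗ id)Δ(a) ∈ A_s` for all `a ∈ A`. -/
def IsRightIntegral (ψ : Module.Dual ℂ W.A) : Prop :=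
  ψ ≠ 0 ∧ ∀ a : W.A, W.sl ψ (W.Δ (a : W.M)) ∈ W.As

/-- A faithful cointegral: a left cointegral `h` such that `(id ⊗ f)Δ(h) = 0` or
`(f ⊗ id)Δ(h) = 0` forces `f = 0`. -/
def IsFaithfulCointegral (h : W.M) : Prop :=
  W.IsLeftCointegral h ∧ ∀ f : Module.Dual ℂ W.A,
    (W.sr f (W.Δ h) = 0 → f = 0) ∧ (W.sl f (W.Δ h) = 0 → f = 0)

/-- The left leg of `Δ(Hs)` is all of `A`: every subspace `V` with
`Δ(h)(1 ⊗ a) ∈ V ⊗ A` for all `h ∈ Hs`, `a ∈ A` contains `A`. -/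
def LeftLegFull (Hs : Set W.M) : Prop :=
  ∀ V : Submodule ℂ W.M,
    (∀ h ∈ Hs, ∀ a ∈ W.A, W.Δ h * W.tp 1 a ∈
      Submodule.span ℂ (Set.image2 (fun x y : W.M => W.tp x y) (V : Set W.M) (W.A : Set W.M))) →
    ∀ a ∈ W.A, a ∈ V

/-- The right leg of `Δ(Hs)` is all of `A`: every subspace `V` with
`(a ⊗ 1)Δ(h) ∈ A ⊗ V` for all `h ∈ Hs`, `a ∈ A` contains `A`. -/
def RightLegFull (Hs : Set W.M) : Prop :=
  ∀ V : Submodule ℂ W.M,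
    (∀ h ∈ Hs, ∀ a ∈ W.A, W.tp a 1 * W.Δ h ∈
      Submodule.span ℂ (Set.image2 (fun x y : W.M => W.tp x y) (W.A : Set W.M) (V : Set W.M))) →
    ∀ a ∈ W.A, a ∈ V

/-- `(A, Δ)` is of discrete type: the set `H` of left cointegrals in `A` is faithful,
i.e. both legs of `Δ(H)` are all of `A`. -/
def DiscreteType : Prop :=
  W.LeftLegFull (W.Hspace : Set W.M) ∧ W.RightLegFull (W.Hspace : Set W.M)

/-- Right multiplication by `a ∈ A`, as a linear map of `A`. -/
def rmul (a : W.A) : W.A →ₗ[ℂ] W.A where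
  toFun b := b * a
  map_add' x y := add_mul x y a
  map_smul' c x := smul_mul_assoc c x a

/-- Right multiplication by a multiplier `m ∈ M(A)`, as a linear map of `A`. -/
def rmulM (m : W.M) : W.A →ₗ[ℂ] W.A where
  toFun b := ⟨(b : W.M) * m, W.idealR m b b.2⟩
  map_add' x y := Subtype.ext (by simp [add_mul])
  map_smul' c x := Subtype.ext (by simp [smul_mul_assoc])

/-- The space `Ã = A·A' = {ω(· a) : ω ∈ A', a ∈ A}` of functionals on `A`. -/
def Atilde : Submodule ℂ (Module.Dual ℂ W.A) :=
  Submodule.span ℂ {ω | ∃ (f : Module.Dual ℂ W.A) (a : W.A), ω = f ∘ₗ W.rmul a}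

lemma Atilde_comp_rmulM (m : W.M) {ω : Module.Dual ℂ W.A} (hω : ω ∈ W.Atilde) :
    ω ∘ₗ W.rmulM m ∈ W.Atilde := by
  induction hω using Submodule.span_induction with
  | mem ω h =>
      obtain ⟨f, a, rfl⟩ := h
      refine Submodule.subset_span ⟨f, ⟨m * (a : W.M), W.idealL m a a.2⟩, ?_⟩
      ext b
      simp only [LinearMap.comp_apply, rmul, rmulM, LinearMap.coe_mk, AddHom.coe_mk]
      congr 1
      exact Subtype.ext (mul_assoc (b : W.M) m (a : W.M))
  | zero => simp only [LinearMap.zero_comp]; exact Submodule.zero_mem W.Atilde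
  | add x y _ _ hx hy => simpa [LinearMap.add_comp] using Submodule.add_mem W.Atilde hx hy
  | smul c x _ hx => simpa [LinearMap.smul_comp] using Submodule.smul_mem W.Atilde c hx

/-- The antipode as a map `A → A`. -/
def SA : W.A →ₗ[ℂ] W.A where
  toFun a := ⟨W.S (a : W.M), W.S_mem a a.2⟩
  map_add' x y := Subtype.ext (by simp)
  map_smul' c x := Subtype.ext (by simp)

/-- The bilinear map `ω ⊗ h ↦ (ω ⊗ id)Δ(h)` on `A' × H`. -/
def slH : Module.Dual ℂ W.A →ₗ[ℂ] (W.Hspace →ₗ[ℂ] W.M) where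
  toFun ω := (W.sl ω) ∘ₗ (W.Δ ∘ₗ W.Hspace.subtype)
  map_add' x y := by rw [map_add, LinearMap.add_comp]
  map_smul' c x := by rw [map_smul, LinearMap.smul_comp]; try rfl

/-- The bilinear map `ω ⊗ h ↦ (id ⊗ ω)Δ(h)` on `A' × H`. -/
def srH : Module.Dual ℂ W.A →ₗ[ℂ] (W.Hspace →ₗ[ℂ] W.M) where
  toFun ω := (W.sr ω) ∘ₗ (W.Δ ∘ₗ W.Hspace.subtype)
  map_add' x y := by rw [map_add, LinearMap.add_comp]
  map_smul' c x := by rw [map_smul, LinearMap.smul_comp]; try rfl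

/-- The map `ω ⊗ h ↦ (ω ⊗ id)Δ(h) : A' ⊗ H → M(A)`. -/
def Phi_s : (Module.Dual ℂ W.A) ⊗[ℂ] W.Hspace →ₗ[ℂ] W.M := TensorProduct.lift W.slH

/-- The map `ω ⊗ h ↦ (id ⊗ ω)Δ(h) : A' ⊗ H → M(A)`. -/
def Phi_t : (Module.Dual ℂ W.A) ⊗[ℂ] W.Hspace →ₗ[ℂ] W.M := TensorProduct.lift W.srH

/-- The map `ω ⊗ h ↦ (ω ⊗ id)Δ(h) : Ã ⊗ H → M(A)`. -/
def PhiT_s : W.Atilde ⊗[ℂ] W.Hspace →ₗ[ℂ] W.M :=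
  TensorProduct.lift (W.slH ∘ₗ W.Atilde.subtype)

/-- The map `ω ⊗ h ↦ (id ⊗ ω)Δ(h) : Ã ⊗ H → M(A)`. -/
def PhiT_t : W.Atilde ⊗[ℂ] W.Hspace →ₗ[ℂ] W.M :=
  TensorProduct.lift (W.srH ∘ₗ W.Atilde.subtype)

/-- The submodule of `A' ⊗ H` spanned by the balancing relations for the `A_s`-actions
`ω ↼ y = ω(· S(y))` and `y ⇀ h = h·S(y)`:  `A' ⊗_{A_s} H` is `(A' ⊗ H)/Kbal_s`. -/
def Kbal_s : Submodule ℂ ((Module.Dual ℂ W.A) ⊗[ℂ] W.Hspace) :=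
  Submodule.span ℂ
    {t | ∃ (ω : Module.Dual ℂ W.A) (y : W.M) (_ : y ∈ W.As) (h : W.Hspace),
      t = (ω ∘ₗ W.rmulM (W.S y)) ⊗ₜ[ℂ] h -
          ω ⊗ₜ[ℂ] (⟨(h : W.M) * W.S y, W.Hspace_mul_mem (W.S y) h.2⟩ : W.Hspace)}

/-- The submodule of `A' ⊗ H` spanned by the balancing relations for the `A_t`-actions
`x ⇀ ω = ω(· x)` and right multiplication on `H`:  `A' ⊗_{A_t} H` is `(A' ⊗ H)/Kbal_t`. -/
def Kbal_t : Submodule ℂ ((Module.Dual ℂ W.A) ⊗[ℂ] W.Hspace) :=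
  Submodule.span ℂ
    {t | ∃ (ω : Module.Dual ℂ W.A) (x : W.M) (_ : x ∈ W.At) (h : W.Hspace),
      t = (ω ∘ₗ W.rmulM x) ⊗ₜ[ℂ] h -
          ω ⊗ₜ[ℂ] (⟨(h : W.M) * x, W.Hspace_mul_mem x h.2⟩ : W.Hspace)}

/-- The balancing relations inside `Ã ⊗ H`, for the `A_s`-actions. -/
def KbalT_s : Submodule ℂ (W.Atilde ⊗[ℂ] W.Hspace) :=
  Submodule.span ℂ
    {t | ∃ (ω : W.Atilde) (y : W.M) (_ : y ∈ W.As) (h : W.Hspace),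
      t = (⟨(ω : Module.Dual ℂ W.A) ∘ₗ W.rmulM (W.S y),
              W.Atilde_comp_rmulM (W.S y) ω.2⟩ : W.Atilde) ⊗ₜ[ℂ] h -
          ω ⊗ₜ[ℂ] (⟨(h : W.M) * W.S y, W.Hspace_mul_mem (W.S y) h.2⟩ : W.Hspace)}

/-- The balancing relations inside `Ã ⊗ H`, for the `A_t`-actions. -/
def KbalT_t : Submodule ℂ (W.Atilde ⊗[ℂ] W.Hspace) :=
  Submodule.span ℂ
    {t | ∃ (ω : W.Atilde) (x : W.M) (_ : x ∈ W.At) (h : W.Hspace),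
      t = (⟨(ω : Module.Dual ℂ W.A) ∘ₗ W.rmulM x,
              W.Atilde_comp_rmulM x ω.2⟩ : W.Atilde) ⊗ₜ[ℂ] h -
          ω ⊗ₜ[ℂ] (⟨(h : W.M) * x, W.Hspace_mul_mem x h.2⟩ : W.Hspace)}

/-!
Write `T ω = (id ⊗ ω)Δ(h)`. For `ω = f(· b)` one has `T ω = (id ⊗ f)(Δ(h)(1 ⊗ b))`, and
`Δ(h)(1 ⊗ b) ∈ A ⊗ A`, so `T` maps `Ã` into `A`. Conversely, let `f ∈ A'` vanish on the range
of `T`. For every `g ∈ A'`, evaluating `f ⊗ g` on `Δ(h)(1 ⊗ b)` in the two possible orders gives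
`g((f ⊗ id)(Δ(h)(1 ⊗ b))) = f(T(g(· b))) = 0`, hence `(f ⊗ id)Δ(h)·b = 0` for all `b`, so
`(f ⊗ id)Δ(h) = 0` and `f = 0` by faithfulness. Over a field a subspace of `A` annihilated by
no non-zero functional is all of `A`, so `T(Ã) = A`. Injectivity is faithfulness itself, and the
map `ω ↦ (ω ⊗ id)Δ(h)` is handled symmetrically.
-/

lemma _root_.Submodule.le_of_forall_dual_eq_zero {K V : Type*} [Field K] [AddCommGroup V]
    [Module K V] {N P : Submodule K V}
    (h : ∀ f : Module.Dual K N, (∀ x : N, (x : V) ∈ P → f x = 0) → f = 0) : N ≤ P := by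
  have hann : (P.comap N.subtype).dualAnnihilator = ⊥ :=
    eq_bot_iff.2 fun f hf => h f fun x hx => (Submodule.mem_dualAnnihilator f).1 hf x hx
  rw [Submodule.dualAnnihilator_eq_bot_iff, Submodule.comap_subtype_eq_top] at hann
  exact hann

/-- The copy of `A ⊗ A` inside `M(A ⊗ A)`. -/
def AtensorA : Submodule ℂ W.M2 :=
  Submodule.span ℂ (Set.image2 (fun x y : W.M => W.tp x y) (W.A : Set W.M) (W.A : Set W.M))

section Slices

variable {W}

lemma sl_mem_of_mem_AtensorA (f : Module.Dual ℂ W.A) {z : W.M2} (hz : z ∈ W.AtensorA) :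
    W.sl f z ∈ W.A := by
  induction hz using Submodule.span_induction with
  | mem z hz =>
      obtain ⟨a, ha, b, hb, rfl⟩ := hz
      rw [W.sl_tp f ⟨a, ha⟩ ⟨b, hb⟩]
      exact SMulMemClass.smul_mem _ hb
  | zero => simp
  | add x y _ _ hx hy => simpa using add_mem hx hy
  | smul c x _ hx => simpa using SMulMemClass.smul_mem c hx

lemma sr_mem_of_mem_AtensorA (f : Module.Dual ℂ W.A) {z : W.M2} (hz : z ∈ W.AtensorA) :
    W.sr f z ∈ W.A := by
  induction hz using Submodule.span_induction with
  | mem z hz =>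
      obtain ⟨a, ha, b, hb, rfl⟩ := hz
      rw [W.sr_tp f ⟨a, ha⟩ ⟨b, hb⟩]
      exact SMulMemClass.smul_mem _ ha
  | zero => simp
  | add x y _ _ hx hy => simpa using add_mem hx hy
  | smul c x _ hx => simpa using SMulMemClass.smul_mem c hx

/-- Both sides are `(f ⊗ g)(z)`. -/
lemma apply_sl_eq_apply_sr (f g : Module.Dual ℂ W.A) {z : W.M2} (hz : z ∈ W.AtensorA) :
    g ⟨W.sl f z, sl_mem_of_mem_AtensorA f hz⟩ = f ⟨W.sr g z, sr_mem_of_mem_AtensorA g hz⟩ := by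
  induction hz using Submodule.span_induction with
  | mem z hz =>
      obtain ⟨a, ha, b, hb, rfl⟩ := hz
      simp only [W.sl_tp f ⟨a, ha⟩ ⟨b, hb⟩, W.sr_tp g ⟨a, ha⟩ ⟨b, hb⟩]
      change g (f ⟨a, ha⟩ • ⟨b, hb⟩) = f (g ⟨b, hb⟩ • ⟨a, ha⟩)
      simp only [map_smul, smul_eq_mul, mul_comm]
  | zero =>
      simp only [map_zero]
      exact (map_zero g).trans (map_zero f).symm
  | add x y _ _ hx hy =>
      have hsum := congr($hx + $hy)
      rw [← map_add, ← map_add] at hsum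
      simpa only [AddMemClass.mk_add_mk, map_add] using hsum
  | smul c x _ hx =>
      have hsmul := congr(c • $hx)
      rw [← map_smul, ← map_smul] at hsmul
      simpa only [SetLike.mk_smul_mk, map_smul] using hsmul

lemma sr_comp_rmul_of_mem_AtensorA (f : Module.Dual ℂ W.A) (b : W.A) {z : W.M2}
    (hz : z ∈ W.AtensorA) : W.sr (f ∘ₗ W.rmul b) z = W.sr f (z * W.tp 1 b) := by
  induction hz using Submodule.span_induction with
  | mem z hz =>
      obtain ⟨p, hp, q, hq, rfl⟩ := hz
      rw [W.tp_mul, mul_one, W.sr_tp _ ⟨p, hp⟩ ⟨q, hq⟩]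
      exact (W.sr_tp f ⟨p, hp⟩ (⟨q, hq⟩ * b)).symm
  | zero => simp
  | add x y _ _ hx hy => rw [map_add, hx, hy, add_mul, map_add]
  | smul c x _ hx => rw [map_smul, hx, smul_mul_assoc, map_smul]

lemma sl_comp_rmul_of_mem_AtensorA (f : Module.Dual ℂ W.A) (a : W.A) {z : W.M2}
    (hz : z ∈ W.AtensorA) : W.sl (f ∘ₗ W.rmul a) z = W.sl f (z * W.tp a 1) := by
  induction hz using Submodule.span_induction with
  | mem z hz =>
      obtain ⟨p, hp, q, hq, rfl⟩ := hz
      rw [W.tp_mul, mul_one, W.sl_tp _ ⟨p, hp⟩ ⟨q, hq⟩]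
      exact (W.sl_tp f (⟨p, hp⟩ * a) ⟨q, hq⟩).symm
  | zero => simp
  | add x y _ _ hx hy => rw [map_add, hx, hy, add_mul, map_add]
  | smul c x _ hx => rw [map_smul, hx, smul_mul_assoc, map_smul]

lemma sr_comp_rmul_Δ {a : W.M} (ha : a ∈ W.A) (f : Module.Dual ℂ W.A) (b : W.A) :
    W.sr (f ∘ₗ W.rmul b) (W.Δ a) = W.sr f (W.Δ a * W.tp 1 b) := by
  refine sub_eq_zero.mp (W.nondegR _ fun c hc => ?_)
  rw [mul_sub, sub_eq_zero, ← W.sr_mul_left, ← W.sr_mul_left, ← mul_assoc]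
  exact sr_comp_rmul_of_mem_AtensorA f b (W.Δ_leg2 c hc a ha)

lemma sl_comp_rmul_Δ {a : W.M} (ha : a ∈ W.A) (f : Module.Dual ℂ W.A) (b : W.A) :
    W.sl (f ∘ₗ W.rmul b) (W.Δ a) = W.sl f (W.Δ a * W.tp b 1) := by
  refine sub_eq_zero.mp (W.nondegR _ fun c hc => ?_)
  rw [mul_sub, sub_eq_zero, ← W.sl_mul_left, ← W.sl_mul_left, ← mul_assoc]
  exact sl_comp_rmul_of_mem_AtensorA f b (W.Δ_leg4 c hc a ha)

lemma range_sr_flip_comp_le {h : W.M} (hA : h ∈ W.A) :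
    LinearMap.range (W.sr.flip (W.Δ h) ∘ₗ W.Atilde.subtype) ≤ W.A.toSubmodule := by
  rw [LinearMap.range_comp, Submodule.range_subtype, Atilde, Submodule.map_span,
    Submodule.span_le]
  rintro _ ⟨_, ⟨f, b, rfl⟩, rfl⟩
  rw [LinearMap.flip_apply, sr_comp_rmul_Δ hA]
  exact sr_mem_of_mem_AtensorA f (W.Δ_leg1 h hA b b.2)

lemma range_sl_flip_comp_le {h : W.M} (hA : h ∈ W.A) :
    LinearMap.range (W.sl.flip (W.Δ h) ∘ₗ W.Atilde.subtype) ≤ W.A.toSubmodule := by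
  rw [LinearMap.range_comp, Submodule.range_subtype, Atilde, Submodule.map_span,
    Submodule.span_le]
  rintro _ ⟨_, ⟨f, b, rfl⟩, rfl⟩
  rw [LinearMap.flip_apply, sl_comp_rmul_Δ hA]
  exact sl_mem_of_mem_AtensorA f (W.Δ_leg3 h hA b b.2)

lemma le_range_sr_flip_comp {h : W.M} (hA : h ∈ W.A)
    (hfaith : ∀ f : Module.Dual ℂ W.A, W.sl f (W.Δ h) = 0 → f = 0) :
    W.A.toSubmodule ≤ LinearMap.range (W.sr.flip (W.Δ h) ∘ₗ W.Atilde.subtype) := by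
  refine Submodule.le_of_forall_dual_eq_zero fun f hf => hfaith f (W.nondegL _ fun b hb => ?_)
  rw [← W.sl_mul_right]
  have hz := W.Δ_leg1 h hA b hb
  suffices hzero : (⟨_, sl_mem_of_mem_AtensorA f hz⟩ : W.A) = 0 from congrArg Subtype.val hzero
  refine (Module.forall_dual_apply_eq_zero_iff ℂ _).1 fun g => ?_
  rw [apply_sl_eq_apply_sr f g hz]
  exact hf _ ⟨⟨g ∘ₗ W.rmul ⟨b, hb⟩, Submodule.subset_span ⟨g, _, rfl⟩⟩,
    sr_comp_rmul_Δ hA g ⟨b, hb⟩⟩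

lemma le_range_sl_flip_comp {h : W.M} (hA : h ∈ W.A)
    (hfaith : ∀ f : Module.Dual ℂ W.A, W.sr f (W.Δ h) = 0 → f = 0) :
    W.A.toSubmodule ≤ LinearMap.range (W.sl.flip (W.Δ h) ∘ₗ W.Atilde.subtype) := by
  refine Submodule.le_of_forall_dual_eq_zero fun f hf => hfaith f (W.nondegL _ fun a ha => ?_)
  rw [← W.sr_mul_right]
  have hz := W.Δ_leg3 h hA a ha
  suffices hzero : (⟨_, sr_mem_of_mem_AtensorA f hz⟩ : W.A) = 0 from congrArg Subtype.val hzero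
  refine (Module.forall_dual_apply_eq_zero_iff ℂ _).1 fun g => ?_
  rw [← apply_sl_eq_apply_sr g f hz]
  exact hf _ ⟨⟨g ∘ₗ W.rmul ⟨a, ha⟩, Submodule.subset_span ⟨g, _, rfl⟩⟩,
    sl_comp_rmul_Δ hA g ⟨a, ha⟩⟩

end Slices

end RegularWMHA

/-- Let `(A, Δ)` be a regular weak multiplier Hopf algebra with a single
faithful left cointegral `h` (lying in `A`).  Then the maps `ω ↦ (id ⊗ ω)Δ(h)` and
`ω ↦ (ω ⊗ id)Δ(h)` are bijective from `Ã` onto `A`. -/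
theorem single_faithful_cointegral_bijections (W : RegularWMHA)
    (h : W.M) (hA : h ∈ W.A) (hf : W.IsFaithfulCointegral h) :
    (Function.Injective ((W.sr.flip (W.Δ h)) ∘ₗ W.Atilde.subtype) ∧
      LinearMap.range ((W.sr.flip (W.Δ h)) ∘ₗ W.Atilde.subtype) = W.A.toSubmodule) ∧
    (Function.Injective ((W.sl.flip (W.Δ h)) ∘ₗ W.Atilde.subtype) ∧
      LinearMap.range ((W.sl.flip (W.Δ h)) ∘ₗ W.Atilde.subtype) = W.A.toSubmodule) := by
  obtain ⟨-, hfaith⟩ := hf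
  have hfaith_r : ∀ f, W.sr f (W.Δ h) = 0 → f = 0 := fun f => (hfaith f).1
  have hfaith_l : ∀ f, W.sl f (W.Δ h) = 0 → f = 0 := fun f => (hfaith f).2
  refine ⟨⟨?_, le_antisymm ?_ ?_⟩, ⟨?_, le_antisymm ?_ ?_⟩⟩
  · exact (injective_iff_map_eq_zero _).2 fun ω hω => Subtype.ext (hfaith_r ω hω)
  · exact RegularWMHA.range_sr_flip_comp_le hA
  · exact RegularWMHA.le_range_sr_flip_comp hA hfaith_l
  · exact (injective_iff_map_eq_zero _).2 fun ω hω => Subtype.ext (hfaith_l ω hω)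
  · exact RegularWMHA.range_sl_flip_comp_le hA
  · exact RegularWMHA.le_range_sl_flip_comp hA hfaith_r
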